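/- For the map f: M(n,R) → ℕ ∪ {∞} defined by f(A) = dim_k(R^n / R^n A), where R^n A denotes the left R-submodule of R^n spanned by the rows resulting from right multiplication by A, one has f(AB) = f(A) + f(B) for all A, B ∈ M(n,R) (with the convention m + ∞ = ∞ + m = ∞). -/

import Mathlib

/-- `R`, together with the embedding `ι : k →+* R` and the element `x : R`, is a
left skew polynomial ring `k[x; α, δ]`: `δ` is an `α`-derivation, the commutation
rule `x * a = α a * x + δ a` holds, and every element of `R` is uniquely a
polynomial `a₀ + a₁ x + ⋯ + aₘ xᵐ` with coefficients in `k`. -/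
structure IsSkewPolynomialRing (k R : Type*) [Field k] [Ring R]
    (α : k →+* k) (δ : k → k) (ι : k →+* R) (x : R) : Prop where
  delta_add : ∀ a b : k, δ (a + b) = δ a + δ b
  delta_mul : ∀ a b : k, δ (a * b) = δ a * α b + a * δ b
  commute_x : ∀ a : k, x * ι a = ι (α a) * x + ι (δ a)
  repr_bijective : Function.Bijective fun p : ℕ →₀ k => p.sum fun i a => ι a * x ^ i

/-- The degree of a (nonzero) element of the skew polynomial ring, read off from its
unique representation as a polynomial in `x`. (Junk value `0` at `r = 0`.) -/
noncomputable def skewDeg {k R : Type*} [Field k] [Ring R] {α : k →+* k} {δ : k → k}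
    {ι : k →+* R} {x : R} (h : IsSkewPolynomialRing k R α δ ι x) (r : R) : ℕ :=
  WithBot.unbotD 0 (((Equiv.ofBijective _ h.repr_bijective).symm r).support.max)

/-- `dim_k (Rⁿ / Rⁿ A) ∈ ℕ ∪ {∞}`: the `k`-dimension of the quotient of the space of
row vectors `Rⁿ` by the left `R`-submodule `Rⁿ A` spanned by the rows of `A`. -/
noncomputable def quotDim (k : Type*) {R : Type*} [Field k] [Ring R] (ι : k →+* R)
    {n : ℕ} (A : Matrix (Fin n) (Fin n) R) : ℕ∞ :=
  letI : Module k ((Fin n → R) ⧸ Submodule.span R (Set.range fun i => A i)) :=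
    Module.compHom _ ι
  Cardinal.toENat
    (Module.rank k ((Fin n → R) ⧸ Submodule.span R (Set.range fun i => A i)))

/-
Everything is a `k`-vector space through `ι`. If `v ↦ v B` is injective, it maps `Rⁿ / Rⁿ A`
isomorphically onto `Rⁿ B / Rⁿ A B`, the kernel of `Rⁿ / Rⁿ A B ↠ Rⁿ / Rⁿ B`, so the dimensions add.
Otherwise `u B = 0` for some `u ≠ 0`, and then `Rⁿ / Rⁿ B` is infinite-dimensional: were it
finite-dimensional, the vectors `xⁱ eⱼ` would be dependent modulo `Rⁿ B`, giving `wⱼ B = pⱼ eⱼ` with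
`pⱼ ≠ 0`. As `R` is a domain, `w₁, …, wₙ, u` would then be `n + 1` left independent vectors in `Rⁿ`,
against the strong rank condition, which `R` satisfies by a degree count: vectors of degree `≤ e`
form a `k`-space of dimension `n (e + 1)`. Since `Rⁿ / Rⁿ A B ↠ Rⁿ / Rⁿ B`, both sides are then `∞`.
-/

open Function LinearMap Matrix

section QuotientRank

universe u

variable {K R M : Type*} {N P : Type u} [DivisionRing K] [Ring R] [SMul K R]
  [AddCommGroup M] [AddCommGroup N] [AddCommGroup P] [Module R M] [Module R N] [Module R P]
  [Module K M] [Module K N] [Module K P] [IsScalarTower K R M] [IsScalarTower K R N]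
  [IsScalarTower K R P]

theorem rank_quotient_range_restrictScalars (f : M →ₗ[R] N) :
    Module.rank K (N ⧸ range (f.restrictScalars K)) = Module.rank K (N ⧸ range f) := by
  rw [range_restrictScalars]
  exact (Submodule.Quotient.restrictScalarsEquiv K _).rank_eq

theorem rank_quotient_range_comp (f : M →ₗ[R] N) {g : N →ₗ[R] P} (hg : Injective g) :
    Module.rank K (P ⧸ range (g ∘ₗ f)) =
      Module.rank K (P ⧸ range g) + Module.rank K (N ⧸ range f) := by
  rw [← rank_quotient_range_restrictScalars (g ∘ₗ f), ← rank_quotient_range_restrictScalars g,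
    ← rank_quotient_range_restrictScalars f, restrictScalars_comp]
  set f' := f.restrictScalars K
  set g' := g.restrictScalars K
  set S := range (g' ∘ₗ f') with hS
  have hker : ker (S.mkQ ∘ₗ g') = range f' := by
    rw [ker_comp, Submodule.ker_mkQ, hS, range_comp,
      Submodule.comap_map_eq_of_injective (f := g') hg]
  rw [← rank_quotient_add_rank_of_divisionRing ((range g').map S.mkQ),
    (Submodule.quotientQuotientEquivQuotient _ _ (range_comp_le_range f' g')).rank_eq,
    ← range_comp, ← hker, (S.mkQ ∘ₗ g').quotKerEquivRange.rank_eq]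

theorem rank_quotient_range_le_rank_quotient_range_comp (f : M →ₗ[R] N) (g : N →ₗ[R] P) :
    Module.rank K (P ⧸ range g) ≤ Module.rank K (P ⧸ range (g ∘ₗ f)) := by
  rw [← rank_quotient_range_restrictScalars (g ∘ₗ f), ← rank_quotient_range_restrictScalars g,
    restrictScalars_comp]
  exact rank_le_of_surjective _ (Submodule.factor_surjective (range_comp_le_range _ _))

end QuotientRank

theorem Matrix.exists_forall_smul_ne_zero_of_not_injective {R ι : Type*} [Ring R] [NoZeroDivisors R]
    [StrongRankCondition R] [Fintype ι] [DecidableEq ι] (C : Matrix ι ι R)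
    (hC : ¬Injective (vecMulLinear C)) :
    ∃ m : (ι → R) ⧸ range (vecMulLinear C), ∀ p : R, p ≠ 0 → p • m ≠ 0 := by
  obtain ⟨u, huC, hu⟩ : ∃ u, u ᵥ* C = 0 ∧ u ≠ 0 := by
    simpa [injective_iff_map_eq_zero] using hC
  by_contra! htors
  have hdiag : ∀ j, ∃ p : R, p ≠ 0 ∧ ∃ w : ι → R, w ᵥ* C = p • Pi.single j 1 := fun j => by
    obtain ⟨p, hp, hpj⟩ := htors (Submodule.Quotient.mk (Pi.single j 1))
    rw [← Submodule.Quotient.mk_smul, Submodule.Quotient.mk_eq_zero] at hpj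
    exact ⟨p, hp, hpj⟩
  choose p hp w hw using hdiag
  have hwC (c : ι → R) : c ᵥ* of w ᵥ* C = fun j => c j * p j := by
    ext j
    rw [vecMul_vecMul, show of w * C = fun j => p j • Pi.single j 1 from funext hw]
    simp [vecMul, dotProduct, Pi.single_apply]
  -- `u` together with the rows `w j` gives `card ι + 1` left independent vectors in `R^ι`
  let W : Matrix (Option ι) ι R := fun o => o.elim u w
  have hW (c : Option ι → R) : c ᵥ* W = c none • u + (fun j => c (some j)) ᵥ* of w := by
    ext i
    simp [vecMul, dotProduct, Fintype.sum_option, W]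
  have hW_inj : Injective (vecMulLinear W) := by
    refine (injective_iff_map_eq_zero _).2 fun c hc => ?_
    rw [vecMulLinear_apply, hW] at hc
    have hsome : (fun j => c (some j)) = 0 := by
      have := congrArg (· ᵥ* C) hc
      simp only [add_vecMul, smul_vecMul, huC, smul_zero, zero_add, hwC, zero_vecMul] at this
      exact funext fun j => (mul_eq_zero.1 (congrFun this j)).resolve_right (hp j)
    rw [hsome, zero_vecMul, add_zero] at hc
    obtain ⟨i, hi⟩ := Function.ne_iff.1 hu
    have hnone : c none = 0 := (mul_eq_zero.1 (congrFun hc i)).resolve_right hi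
    ext (_ | j)
    exacts [hnone, congrFun hsome j]
  simpa using card_le_of_injective R _ hW_inj

section DegreeFiltration

variable (k : Type*) {R : Type*} [Field k] [Ring R] [Module k R]

def degreeLE (x : R) (d : ℕ) : Submodule k R :=
  Submodule.span k ((x ^ ·) '' Set.Iic d)

variable {k} {x : R}

theorem pow_mem_degreeLE {i d : ℕ} (h : i ≤ d) : x ^ i ∈ degreeLE k x d :=
  Submodule.subset_span ⟨i, h, rfl⟩

theorem degreeLE_mono {d e : ℕ} (h : d ≤ e) : degreeLE k x d ≤ degreeLE k x e :=
  Submodule.span_mono (Set.image_mono (Set.Iic_subset_Iic.2 h))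

variable (k x) in
noncomputable def vecOfCoeffs (ι' : Type*) (d : ℕ) : (ι' → Set.Iic d → k) →ₗ[k] (ι' → R) :=
  LinearMap.pi fun i => Fintype.linearCombination k (fun j : Set.Iic d => x ^ (j : ℕ)) ∘ₗ
    LinearMap.proj i

theorem mem_range_vecOfCoeffs {ι' : Type*} {d : ℕ} {v : ι' → R} :
    v ∈ LinearMap.range (vecOfCoeffs k x ι' d) ↔ ∀ i, v i ∈ degreeLE k x d := by
  simp only [degreeLE, Set.image_eq_range, ← Fintype.range_linearCombination, LinearMap.mem_range,
    funext_iff, vecOfCoeffs, LinearMap.pi_apply, LinearMap.comp_apply, LinearMap.proj_apply]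
  exact ⟨fun ⟨c, hc⟩ i => ⟨c i, hc i⟩, fun hv =>
    ⟨fun i => (hv i).choose, fun i => (hv i).choose_spec⟩⟩

end DegreeFiltration

namespace IsSkewPolynomialRing

variable {k R : Type*} [Field k] [Ring R] {α : k →+* k} {δ : k → k} {ι : k →+* R} {x : R}

section Degree

variable [Module k R] (h : IsSkewPolynomialRing k R α δ ι x)
  (hsmul : ∀ (a : k) (r : R), a • r = ι a * r)
include h hsmul

omit h in
theorem coe_linearCombination_pow :
    ⇑(Finsupp.linearCombination k (x ^ · : ℕ → R)) = fun p => p.sum fun i a => ι a * x ^ i := by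
  ext p
  simp only [Finsupp.linearCombination_apply, hsmul]

theorem linearIndependent_pow : LinearIndependent k (x ^ · : ℕ → R) := by
  unfold LinearIndependent
  rw [coe_linearCombination_pow hsmul]
  exact h.repr_bijective.1

theorem span_pow_eq_top : Submodule.span k (Set.range (x ^ · : ℕ → R)) = ⊤ := by
  rw [← Finsupp.range_linearCombination, LinearMap.range_eq_top, coe_linearCombination_pow hsmul]
  exact h.repr_bijective.2

noncomputable def basis : Module.Basis ℕ k R :=
  .mk (h.linearIndependent_pow hsmul) (h.span_pow_eq_top hsmul).ge

theorem coe_basis : ⇑(h.basis hsmul) = (x ^ ·) := Module.Basis.coe_mk _ _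

noncomputable def coeff (i : ℕ) : R →ₗ[k] k := (h.basis hsmul).coord i

theorem coeff_pow (i j : ℕ) : h.coeff hsmul i (x ^ j) = if j = i then 1 else 0 := by
  rw [coeff, Module.Basis.coord_apply, ← congrFun (h.coe_basis hsmul) j, Module.Basis.repr_self,
    Finsupp.single_apply]

theorem mem_degreeLE_iff {d : ℕ} {r : R} :
    r ∈ degreeLE k x d ↔ ∀ i, d < i → h.coeff hsmul i r = 0 := by
  rw [degreeLE, ← h.coe_basis hsmul, Module.Basis.mem_span_image]
  simp only [Set.subset_def, Finset.mem_coe, Finsupp.mem_support_iff, Set.mem_Iic, coeff,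
    Module.Basis.coord_apply]
  exact forall_congr' fun i => not_imp_comm.trans (by rw [not_le])

theorem coeff_eq_zero_of_mem_degreeLE {d i : ℕ} {r : R} (hr : r ∈ degreeLE k x d) (hi : d < i) :
    h.coeff hsmul i r = 0 :=
  (h.mem_degreeLE_iff hsmul).1 hr i hi

theorem x_mul_smul (a : k) (r : R) :
    x * (a • r) = α a • (x * r) + δ a • r := by
  rw [hsmul, hsmul, hsmul, ← mul_assoc, h.commute_x, add_mul, mul_assoc]

theorem x_mul_mem_degreeLE {d : ℕ} {r : R} (hr : r ∈ degreeLE k x d) :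
    x * r ∈ degreeLE k x (d + 1) := by
  induction hr using Submodule.span_induction with
  | mem r hr =>
    obtain ⟨j, hj, rfl⟩ := hr
    rw [← pow_succ']
    exact pow_mem_degreeLE (Nat.succ_le_succ hj)
  | zero => rw [mul_zero]; exact Submodule.zero_mem _
  | add r s _ _ hr hs => rw [mul_add]; exact Submodule.add_mem _ hr hs
  | smul a r hr hxr =>
    rw [h.x_mul_smul hsmul]
    exact Submodule.add_mem _ (Submodule.smul_mem _ _ hxr)
      (Submodule.smul_mem _ _ (degreeLE_mono (Nat.le_succ d) hr))

theorem coeff_succ_x_mul {d : ℕ} {r : R} (hr : r ∈ degreeLE k x d) :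
    h.coeff hsmul (d + 1) (x * r) = α (h.coeff hsmul d r) := by
  induction hr using Submodule.span_induction with
  | mem r hr =>
    obtain ⟨j, hj, rfl⟩ := hr
    rw [← pow_succ', coeff_pow, coeff_pow]
    split_ifs <;> simp_all
  | zero => simp
  | add r s _ _ hr hs => simp [mul_add, hr, hs]
  | smul a r hr hxr =>
    rw [h.x_mul_smul hsmul, map_add, map_smul, map_smul, hxr,
      h.coeff_eq_zero_of_mem_degreeLE hsmul hr (Nat.lt_succ_self d), map_smul]
    simp

theorem pow_mul_mem_degreeLE (j : ℕ) {d : ℕ} {r : R} (hr : r ∈ degreeLE k x d) :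
    x ^ j * r ∈ degreeLE k x (j + d) := by
  induction j with
  | zero => simpa using hr
  | succ j ih =>
    rw [pow_succ', mul_assoc, Nat.succ_add]
    exact h.x_mul_mem_degreeLE hsmul ih

theorem coeff_add_pow_mul (j : ℕ) {d : ℕ} {r : R} (hr : r ∈ degreeLE k x d) :
    h.coeff hsmul (j + d) (x ^ j * r) = α^[j] (h.coeff hsmul d r) := by
  induction j with
  | zero => simp
  | succ j ih =>
    rw [pow_succ', mul_assoc, Nat.succ_add,
      h.coeff_succ_x_mul hsmul (h.pow_mul_mem_degreeLE hsmul j hr), ih,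
      Function.iterate_succ_apply']

theorem mul_mem_degreeLE {d e : ℕ} {a b : R} (ha : a ∈ degreeLE k x d)
    (hb : b ∈ degreeLE k x e) : a * b ∈ degreeLE k x (d + e) := by
  induction ha using Submodule.span_induction with
  | mem a ha =>
    obtain ⟨j, hj, rfl⟩ := ha
    exact degreeLE_mono (Nat.add_le_add_right hj e) (h.pow_mul_mem_degreeLE hsmul j hb)
  | zero => rw [zero_mul]; exact Submodule.zero_mem _
  | add a a' _ _ ha ha' => rw [add_mul]; exact Submodule.add_mem _ ha ha'
  | smul c a _ ha =>
    rw [hsmul, mul_assoc, ← hsmul]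
    exact Submodule.smul_mem _ _ ha

theorem coeff_add_mul {d e : ℕ} {a b : R} (ha : a ∈ degreeLE k x d)
    (hb : b ∈ degreeLE k x e) :
    h.coeff hsmul (d + e) (a * b) = h.coeff hsmul d a * α^[d] (h.coeff hsmul e b) := by
  induction ha using Submodule.span_induction with
  | mem a ha =>
    obtain ⟨j, hj, rfl⟩ := ha
    rcases (Set.mem_Iic.1 hj).eq_or_lt with rfl | hjd
    · rw [h.coeff_add_pow_mul hsmul j hb, coeff_pow, if_pos rfl, one_mul]
    · rw [h.coeff_eq_zero_of_mem_degreeLE hsmul (h.pow_mul_mem_degreeLE hsmul j hb)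
        (Nat.add_lt_add_right hjd e), coeff_pow, if_neg hjd.ne, zero_mul]
  | zero => simp
  | add a a' _ _ ha ha' => simp [add_mul, ha, ha']
  | smul c a _ ha =>
    rw [hsmul, mul_assoc, ← hsmul, ← hsmul, map_smul, map_smul, ha, smul_eq_mul, smul_eq_mul,
      mul_assoc]

theorem exists_mem_degreeLE_coeff_ne_zero {r : R} (hr : r ≠ 0) :
    ∃ d, r ∈ degreeLE k x d ∧ h.coeff hsmul d r ≠ 0 := by
  have hsupp : ((h.basis hsmul).repr r).support.Nonempty := by simpa using hr
  refine ⟨_, (h.mem_degreeLE_iff hsmul).2 fun i (hi : Finset.max' _ hsupp < i) => ?_, ?_⟩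
  · exact Finsupp.notMem_support_iff.1 fun hmem => hi.not_ge (Finset.le_max' _ i hmem)
  · exact Finsupp.mem_support_iff.1 (Finset.max'_mem _ hsupp)

theorem exists_forall_mem_degreeLE {ι' : Type*} [Fintype ι'] (v : ι' → R) :
    ∃ D, ∀ i, v i ∈ degreeLE k x D := by
  have hdeg (r : R) : ∃ d, r ∈ degreeLE k x d := by
    rcases eq_or_ne r 0 with rfl | hr
    · exact ⟨0, Submodule.zero_mem _⟩
    · exact (h.exists_mem_degreeLE_coeff_ne_zero hsmul hr).imp fun _ => And.left
  choose d hd using hdeg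
  exact ⟨Finset.univ.sup (d ∘ v), fun i =>
    degreeLE_mono (Finset.le_sup (f := d ∘ v) (Finset.mem_univ i)) (hd (v i))⟩

theorem vecOfCoeffs_injective (ι' : Type*) (d : ℕ) : Injective (vecOfCoeffs k x ι' d) := by
  have hL : Injective (Fintype.linearCombination k fun j : Set.Iic d => x ^ (j : ℕ)) :=
    linearIndependent_iff_injective_fintypeLinearCombination.1
      ((h.linearIndependent_pow hsmul).comp _ Subtype.val_injective)
  exact fun c c' hcc => funext fun i => hL (congrFun hcc i)

end Degree

theorem noZeroDivisors (h : IsSkewPolynomialRing k R α δ ι x) : NoZeroDivisors R := by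
  let _ : Module k R := Module.compHom R ι
  have hsmul : ∀ (a : k) (r : R), a • r = ι a * r := fun _ _ => rfl
  refine ⟨fun {a b} hab => ?_⟩
  by_contra! hne
  obtain ⟨d, ha, hda⟩ := h.exists_mem_degreeLE_coeff_ne_zero hsmul hne.1
  obtain ⟨e, hb, heb⟩ := h.exists_mem_degreeLE_coeff_ne_zero hsmul hne.2
  have hlead := h.coeff_add_mul hsmul ha hb
  rw [hab, map_zero] at hlead
  have hαeb : α^[d] (h.coeff hsmul e b) ≠ 0 := fun h0 =>
    heb (α.injective.iterate d (h0.trans (iterate_map_zero α d).symm))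
  exact mul_ne_zero hda hαeb hlead.symm

theorem exists_ne_zero_smul_eq_zero (h : IsSkewPolynomialRing k R α δ ι x) {M : Type*}
    [AddCommGroup M] [Module R M] [Module k M] (hM : ∀ (a : k) (m : M), a • m = ι a • m)
    [FiniteDimensional k M] (m : M) : ∃ p : R, p ≠ 0 ∧ p • m = 0 := by
  let _ : Module k R := Module.compHom R ι
  let orbit : R →ₗ[k] M :=
    { toFun := (· • m)
      map_add' := (add_smul · · m)
      map_smul' := fun a r => by rw [hM, ← mul_smul]; rfl }
  by_contra! htors
  have : FiniteDimensional k R := .of_injective orbit <|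
    (injective_iff_map_eq_zero orbit).2 fun p hp => by_contra fun hp0 => htors p hp0 hp
  exact (Module.Finite.finite_basis (h.basis fun _ _ => rfl)).false

theorem strongRankCondition (h : IsSkewPolynomialRing k R α δ ι x) : StrongRankCondition R := by
  let _ : Module k R := Module.compHom R ι
  have hsmul : ∀ (a : k) (r : R), a • r = ι a * r := fun _ _ => rfl
  have _ : IsScalarTower k R R := ⟨fun a r s => mul_assoc (ι a) r s⟩
  refine (strongRankCondition_iff_succ R).2 fun n f hf => ?_
  obtain ⟨D, hD⟩ := h.exists_forall_mem_degreeLE hsmul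
    fun ij : Fin (n + 1) × Fin n => f (fun j => if ij.1 = j then 1 else 0) ij.2
  have hf_deg {e : ℕ} {v : Fin (n + 1) → R} (hv : ∀ i, v i ∈ degreeLE k x e) (j : Fin n) :
      f v j ∈ degreeLE k x (e + D) := by
    rw [LinearMap.pi_apply_eq_sum_univ f v, Finset.sum_apply]
    exact Submodule.sum_mem _ fun i _ => h.mul_mem_degreeLE hsmul (hv i) (hD (i, j))
  -- `f` injects vectors of degree `≤ e` into vectors of degree `≤ e + D`, and the `k`-dimensions
  -- `(n + 1) (e + 1)` and `n (e + D + 1)` are in the wrong order as soon as `e ≥ n D`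
  set e := n * D with he
  let g := f.restrictScalars k ∘ₗ vecOfCoeffs k x (Fin (n + 1)) e
  have hg : LinearMap.range g ≤ LinearMap.range (vecOfCoeffs k x (Fin n) (e + D)) := by
    rintro _ ⟨c, rfl⟩
    exact mem_range_vecOfCoeffs.2 (hf_deg (mem_range_vecOfCoeffs.1 ⟨c, rfl⟩))
  have hdim := (Submodule.finrank_mono hg).trans (LinearMap.finrank_range_le _)
  have hg_inj : Injective g := hf.comp (h.vecOfCoeffs_injective hsmul _ e)
  rw [LinearMap.finrank_range_of_inj hg_inj] at hdim
  simp only [Module.finrank_pi_fintype, Finset.mem_Iic, Set.mem_Iic, implies_true,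
    Fintype.card_ofFinset, Nat.card_Iic, Finset.sum_const, Finset.card_univ, Fintype.card_fin,
    smul_eq_mul, Module.finrank_self, mul_one] at hdim
  nlinarith

end IsSkewPolynomialRing

/-- For `f : M(n,R) → ℕ ∪ {∞}`, `f A = dim_k (Rⁿ / Rⁿ A)`, one has
`f (A B) = f A + f B` (with the convention `m + ∞ = ∞ + m = ∞`). -/
theorem statement1 {k R : Type*} [Field k] [Ring R]
    (α : k →+* k) (δ : k → k) (ι : k →+* R) (x : R)
    (h : IsSkewPolynomialRing k R α δ ι x)
    {n : ℕ} (A B : Matrix (Fin n) (Fin n) R) :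
    quotDim k ι (A * B) = quotDim k ι A + quotDim k ι B := by
  let _ : Module k R := Module.compHom R ι
  have _ : IsScalarTower k R R := ⟨fun a r s => mul_assoc (ι a) r s⟩
  -- the `k`-structure `quotDim` puts on the quotient is the one induced from `Rⁿ`
  have quotDim_eq (C : Matrix (Fin n) (Fin n) R) :
      quotDim k ι C = (Module.rank k ((Fin n → R) ⧸ range (vecMulLinear C))).toENat := by
    rw [range_vecMulLinear]
    rfl
  have hAB : vecMulLinear (A * B) = vecMulLinear B ∘ₗ vecMulLinear A :=
    LinearMap.ext fun v => (vecMul_vecMul v A B).symm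
  rw [quotDim_eq, quotDim_eq, quotDim_eq, hAB]
  by_cases hB : Injective (vecMulLinear B)
  · rw [rank_quotient_range_comp _ hB, map_add, add_comm]
  have hB_top : (Module.rank k ((Fin n → R) ⧸ range (vecMulLinear B))).toENat = ⊤ := by
    have _ := h.noZeroDivisors
    have _ := h.strongRankCondition
    obtain ⟨m, hm⟩ := Matrix.exists_forall_smul_ne_zero_of_not_injective B hB
    rw [Cardinal.toENat_eq_top, ← not_lt, Module.rank_lt_aleph0_iff]
    intro _
    obtain ⟨p, hp, hpm⟩ := h.exists_ne_zero_smul_eq_zero (fun _ _ => rfl) m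
    exact hm p hp hpm
  rw [hB_top, add_top, ← top_le_iff, ← hB_top]
  exact Cardinal.toENat.monotone' (rank_quotient_range_le_rank_quotient_range_comp _ _)
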